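/- The quasitriangular Hopf algebra ℂ[ℤ_n] with R = (1/n) Σ_{a,b=0}^{n-1} e^{-2πiab/n} gᵃ ⊗ gᵇ is factorizable (i.e., the Drinfeld map p ↦ (p⊗id)(R₂₁R) is a linear isomorphism) if and only if n is odd. -/

import Mathlib

open TensorProduct MonoidAlgebra

noncomputable section

/-- The group algebra `ℂ[ℤ_n]`. -/
abbrev GA (n : ℕ) : Type := MonoidAlgebra ℂ (Multiplicative (ZMod n))

/-- The generator `g` of `ℤ_n` inside `ℂ[ℤ_n]`. -/
def gen (n : ℕ) : Multiplicative (ZMod n) := Multiplicative.ofAdd (1 : ZMod n)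

/-- The diagonal group-like map `g ↦ g ⊗ g`. -/
def diagHom (n : ℕ) : Multiplicative (ZMod n) →* (GA n) ⊗[ℂ] (GA n) where
  toFun x := MonoidAlgebra.of ℂ (Multiplicative (ZMod n)) x ⊗ₜ[ℂ]
      MonoidAlgebra.of ℂ (Multiplicative (ZMod n)) x
  map_one' := by
    rw [Algebra.TensorProduct.one_def]
    simp [MonoidAlgebra.of_apply, MonoidAlgebra.one_def]
  map_mul' x y := by simp [Algebra.TensorProduct.tmul_mul_tmul]

/-- The comultiplication `Δ(g) = g ⊗ g` of the group Hopf algebra `ℂ[ℤ_n]`. -/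
def comulGA (n : ℕ) : GA n →ₐ[ℂ] (GA n) ⊗[ℂ] (GA n) :=
  MonoidAlgebra.lift ℂ _ (Multiplicative (ZMod n)) (diagHom n)

/-- The counit `ε(g) = 1` of the group Hopf algebra `ℂ[ℤ_n]`. -/
def counitGA (n : ℕ) : GA n →ₐ[ℂ] ℂ :=
  MonoidAlgebra.lift ℂ ℂ (Multiplicative (ZMod n)) 1

/-- The antipode `S(g) = g⁻¹` of the group Hopf algebra `ℂ[ℤ_n]`. -/
def antipodeGA (n : ℕ) : GA n →ₐ[ℂ] GA n :=
  MonoidAlgebra.lift ℂ _ (Multiplicative (ZMod n))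
    ((MonoidAlgebra.of ℂ (Multiplicative (ZMod n))).comp (invMonoidHom))

/-- The `R`-matrix `R = (1/n) Σ_{a,b} e^{-2πiab/n} gᵃ ⊗ gᵇ` on `ℂ[ℤ_n]`. -/
def Rmat (n : ℕ) : (GA n) ⊗[ℂ] (GA n) :=
  (n : ℂ)⁻¹ • ∑ a ∈ Finset.range n, ∑ b ∈ Finset.range n,
    Complex.exp (-2 * Real.pi * Complex.I * a * b / n) •
      (MonoidAlgebra.of ℂ (Multiplicative (ZMod n)) (gen n ^ a) ⊗ₜ[ℂ]
        MonoidAlgebra.of ℂ (Multiplicative (ZMod n)) (gen n ^ b))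

/-- `a ⊗ b ↦ a ⊗ b ⊗ 1` in `GA n ⊗ (GA n ⊗ GA n)`. -/
def R12' (n : ℕ) (R : (GA n) ⊗[ℂ] (GA n)) : (GA n) ⊗[ℂ] ((GA n) ⊗[ℂ] (GA n)) :=
  (Algebra.TensorProduct.map (AlgHom.id ℂ (GA n)) Algebra.TensorProduct.includeLeft) R

/-- `a ⊗ b ↦ a ⊗ 1 ⊗ b` in `GA n ⊗ (GA n ⊗ GA n)`. -/
def R13' (n : ℕ) (R : (GA n) ⊗[ℂ] (GA n)) : (GA n) ⊗[ℂ] ((GA n) ⊗[ℂ] (GA n)) :=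
  (Algebra.TensorProduct.map (AlgHom.id ℂ (GA n)) Algebra.TensorProduct.includeRight) R

/-- `a ⊗ b ↦ 1 ⊗ a ⊗ b` in `GA n ⊗ (GA n ⊗ GA n)`. -/
def R23' (n : ℕ) (R : (GA n) ⊗[ℂ] (GA n)) : (GA n) ⊗[ℂ] ((GA n) ⊗[ℂ] (GA n)) :=
  (Algebra.TensorProduct.includeRight :
    ((GA n) ⊗[ℂ] (GA n)) →ₐ[ℂ] (GA n) ⊗[ℂ] ((GA n) ⊗[ℂ] (GA n))) R

/-- The Drinfeld map `p ↦ (p ⊗ id)(R₂₁ R)` of `ℂ[ℤ_n]`. -/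
def drinfeldMapGA (n : ℕ) (p : Module.Dual ℂ (GA n)) : GA n :=
  (TensorProduct.lid ℂ (GA n))
    ((TensorProduct.map p LinearMap.id)
      ((TensorProduct.comm ℂ (GA n) (GA n)) (Rmat n) * Rmat n))

/-!
With `ω` the standard additive character of `ℤ_n`, the elements
`e_a = (1/n) Σ_b ω(-ab) gᵇ` are nonzero orthogonal idempotents of `ℂ[ℤ_n]` and
`R = Σ_a gᵃ ⊗ e_a`. Since `R` is symmetric, `R₂₁R = R² = Σ_a g²ᵃ ⊗ e_a`, so the Drinfeld map is
`p ↦ Σ_a p(g²ᵃ) e_a`. The `e_a` being linearly independent, its kernel consists of the functionals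
vanishing on all the `g²ᵃ`; it is trivial exactly when doubling is surjective on `ℤ_n`, i.e. when
`n` is odd. As `ℂ[ℤ_n]` and its dual have the same dimension, injectivity is bijectivity.
-/

section CharIdempotent

variable {k A : Type*} [Field k] [AddCommGroup A] [Fintype A]

def charIdempotent (ψ : AddChar A k) : MonoidAlgebra k (Multiplicative A) :=
  (Fintype.card A : k)⁻¹ • ∑ b, ψ (-b) • of k _ (Multiplicative.ofAdd b)

theorem of_mul_charIdempotent (ψ : AddChar A k) (a : A) :
    of k _ (Multiplicative.ofAdd a) * charIdempotent ψ = ψ a • charIdempotent ψ := by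
  rw [charIdempotent, mul_smul_comm, smul_comm (ψ a)]
  congr 1
  rw [Finset.mul_sum, Finset.smul_sum]
  refine Fintype.sum_equiv (Equiv.addLeft a) _ _ fun b => ?_
  rw [Equiv.coe_addLeft, mul_smul_comm, ← map_mul, ← ofAdd_add, smul_smul,
    ← AddChar.map_add_eq_mul]
  simp

theorem charIdempotent_mul_charIdempotent (hA : (Fintype.card A : k) ≠ 0)
    (ψ χ : AddChar A k) :
    charIdempotent ψ * charIdempotent χ = if ψ = χ then charIdempotent ψ else 0 := by
  have hsum : ∑ b, ψ (-b) * χ b = if ψ = χ then (Fintype.card A : k) else 0 := by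
    simp_rw [mul_comm (ψ _), ← AddChar.sub_apply, AddChar.sum_eq_ite, sub_eq_zero, eq_comm]
  calc charIdempotent ψ * charIdempotent χ
      = ((Fintype.card A : k)⁻¹ * ∑ b, ψ (-b) * χ b) • charIdempotent χ := by
        rw [charIdempotent, smul_mul_assoc, Finset.sum_mul]
        simp_rw [smul_mul_assoc, of_mul_charIdempotent, smul_smul, ← Finset.sum_smul, smul_smul]
    _ = _ := by rw [hsum]; split_ifs with h <;> simp [h, hA]

theorem charIdempotent_ne_zero (hA : (Fintype.card A : k) ≠ 0) (ψ : AddChar A k) :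
    charIdempotent ψ ≠ 0 := by
  classical
  have hcoeff : (charIdempotent ψ).coeff 1 = (Fintype.card A : k)⁻¹ := by
    simp [charIdempotent, coeff_sum, of_apply, coeff_single, Finsupp.single_apply]
  intro h
  simp only [h] at hcoeff
  exact hA (by simpa using hcoeff.symm)

theorem orthogonalIdempotents_charIdempotent (hA : (Fintype.card A : k) ≠ 0) {ι : Type*}
    {ψ : ι → AddChar A k} (hψ : Function.Injective ψ) :
    OrthogonalIdempotents (fun i => charIdempotent (ψ i)) := by
  classical
  refine OrthogonalIdempotents.iff_mul_eq.2 fun i j => ?_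
  simp [charIdempotent_mul_charIdempotent hA, hψ.eq_iff]

end CharIdempotent

theorem OrthogonalIdempotents.sum_tmul_mul_sum_tmul {R A B ι : Type*} [CommSemiring R]
    [Semiring A] [Algebra R A] [Semiring B] [Algebra R B] [Fintype ι] {e : ι → B}
    (he : OrthogonalIdempotents e) (x y : ι → A) :
    (∑ i, x i ⊗ₜ[R] e i) * (∑ j, y j ⊗ₜ[R] e j) = ∑ i, (x i * y i) ⊗ₜ[R] e i := by
  classical
  simp [Finset.sum_mul, Finset.mul_sum, Algebra.TensorProduct.tmul_mul_tmul, he.mul_eq, tmul_ite]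

theorem OrthogonalIdempotents.linearIndependent {k B ι : Type*} [Field k] [Ring B]
    [Algebra k B] {e : ι → B} (he : OrthogonalIdempotents e) (hne : ∀ i, e i ≠ 0) :
    LinearIndependent k e := by
  classical
  refine linearIndependent_iff'.2 fun s c hc i hi => ?_
  have hci : c i • e i = 0 := by
    simpa [Finset.mul_sum, mul_smul_comm, he.mul_eq, hi] using congrArg (e i * ·) hc
  exact (smul_eq_zero.1 hci).resolve_right (hne i)

theorem MonoidAlgebra.forall_dual_eq_zero_iff_surjective {k G ι : Type*} [CommSemiring k]
    [Nontrivial k] [Monoid G] (f : ι → G) :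
    (∀ p : Module.Dual k (MonoidAlgebra k G), (∀ i, p (of k G (f i)) = 0) → p = 0) ↔
      Function.Surjective f := by
  refine ⟨fun h x => ?_, fun hf p hp => (basis G k).ext fun x => ?_⟩
  · by_contra hx
    push Not at hx
    have hcoord := h ((basis G k).coord x) fun i => by simp [of_apply, ← basis_apply, hx i]
    simpa [of_apply, ← basis_apply] using LinearMap.congr_fun hcoord (of k G x)
  · obtain ⟨i, rfl⟩ := hf x
    simpa [of_apply] using hp i

def sliceLeft {R M N : Type*} [CommSemiring R] [AddCommMonoid M] [Module R M]
    [AddCommMonoid N] [Module R N] (X : M ⊗[R] N) : Module.Dual R M →ₗ[R] N where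
  toFun p := TensorProduct.lid R N (TensorProduct.map p LinearMap.id X)
  map_add' p q := by simp [map_add_left]
  map_smul' c p := by simp [map_smul_left]

theorem sliceLeft_sum_tmul {R M N ι : Type*} [CommSemiring R] [AddCommMonoid M] [Module R M]
    [AddCommMonoid N] [Module R N] (s : Finset ι) (x : ι → M) (y : ι → N)
    (p : Module.Dual R M) :
    sliceLeft (∑ i ∈ s, x i ⊗ₜ[R] y i) p = ∑ i ∈ s, p (x i) • y i := by
  simp [sliceLeft]

theorem ZMod.sum_range_natCast {M : Type*} [AddCommMonoid M] (n : ℕ) [NeZero n]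
    (f : ZMod n → M) : ∑ i ∈ Finset.range n, f i = ∑ x, f x := by
  refine Finset.sum_nbij (↑) (by simp) (fun i hi j hj hij => ?_) (fun x _ => ?_) (by simp)
  · rw [← ZMod.val_cast_of_lt (Finset.mem_range.1 hi),
      ← ZMod.val_cast_of_lt (Finset.mem_range.1 hj), hij]
  · exact ⟨x.val, by simp [ZMod.val_lt], by simp⟩

theorem ZMod.surjective_two_mul_iff_odd (n : ℕ) [NeZero n] :
    Function.Surjective (fun a : ZMod n => 2 * a) ↔ Odd n := by
  rw [Finite.surjective_iff_bijective, ← IsUnit.isUnit_iff_mulLeft_bijective,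
    ← Nat.coprime_two_left, ← ZMod.isUnit_iff_coprime, Nat.cast_ofNat]

theorem drinfeldMapGA_eq_sliceLeft (n : ℕ) :
    drinfeldMapGA n = sliceLeft (TensorProduct.comm ℂ (GA n) (GA n) (Rmat n) * Rmat n) :=
  rfl

section Cyclic

variable {n : ℕ} [NeZero n]

def fourierIdempotent (a : ZMod n) : GA n := charIdempotent (ZMod.stdAddChar.mulShift a)

theorem orthogonalIdempotents_fourierIdempotent :
    OrthogonalIdempotents (fourierIdempotent (n := n)) :=
  orthogonalIdempotents_charIdempotent (by simp [NeZero.ne n])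
    (AddChar.to_mulShift_inj_of_isPrimitive (ZMod.isPrimitive_stdAddChar n))

theorem fourierIdempotent_ne_zero (a : ZMod n) : fourierIdempotent a ≠ 0 :=
  charIdempotent_ne_zero (by simp [NeZero.ne n]) _

theorem Rmat_eq_sum_stdAddChar : Rmat n = (n : ℂ)⁻¹ • ∑ a : ZMod n, ∑ b : ZMod n,
    ZMod.stdAddChar (-(a * b)) •
      (of ℂ _ (Multiplicative.ofAdd a) ⊗ₜ[ℂ] of ℂ _ (Multiplicative.ofAdd b)) := by
  have hgen (a : ℕ) : gen n ^ a = Multiplicative.ofAdd (a : ZMod n) := by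
    simp [gen, ← ofAdd_nsmul]
  have hexp (a b : ℕ) : Complex.exp (-2 * Real.pi * Complex.I * a * b / n) =
      ZMod.stdAddChar (-((a : ZMod n) * (b : ZMod n))) := by
    rw [show -((a : ZMod n) * (b : ZMod n)) = ((-(a * b : ℤ) : ℤ) : ZMod n) by push_cast; ring,
      ZMod.stdAddChar_coe]
    congr 1
    push_cast
    ring
  simp only [Rmat, hgen, hexp, ← ZMod.sum_range_natCast n]

theorem Rmat_eq_sum_tmul_fourierIdempotent :
    Rmat n = ∑ a : ZMod n, of ℂ _ (Multiplicative.ofAdd a) ⊗ₜ[ℂ] fourierIdempotent a := by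
  simp only [Rmat_eq_sum_stdAddChar, fourierIdempotent, charIdempotent, ZMod.card,
    AddChar.mulShift_apply, mul_neg, tmul_smul, tmul_sum, Finset.smul_sum]

theorem comm_Rmat : TensorProduct.comm ℂ (GA n) (GA n) (Rmat n) = Rmat n := by
  simp only [Rmat_eq_sum_stdAddChar, map_smul, map_sum, comm_tmul]
  rw [Finset.sum_comm]
  simp only [mul_comm]

theorem comm_Rmat_mul_Rmat : TensorProduct.comm ℂ (GA n) (GA n) (Rmat n) * Rmat n =
    ∑ a : ZMod n, of ℂ _ (Multiplicative.ofAdd (2 * a)) ⊗ₜ[ℂ] fourierIdempotent a := by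
  rw [comm_Rmat, Rmat_eq_sum_tmul_fourierIdempotent,
    orthogonalIdempotents_fourierIdempotent.sum_tmul_mul_sum_tmul]
  simp [← ofAdd_add, two_mul]

theorem drinfeldMapGA_eq_zero_iff (p : Module.Dual ℂ (GA n)) :
    drinfeldMapGA n p = 0 ↔ ∀ a : ZMod n, p (of ℂ _ (Multiplicative.ofAdd (2 * a))) = 0 := by
  rw [drinfeldMapGA_eq_sliceLeft, comm_Rmat_mul_Rmat, sliceLeft_sum_tmul]
  refine ⟨fun h => Fintype.linearIndependent_iff.1 ?_ _ h,
    fun h => by simp only [h, zero_smul, Finset.sum_const_zero]⟩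
  exact orthogonalIdempotents_fourierIdempotent.linearIndependent fourierIdempotent_ne_zero

theorem injective_drinfeldMapGA_iff :
    Function.Injective (drinfeldMapGA n) ↔ Function.Surjective (fun a : ZMod n => 2 * a) := by
  rw [drinfeldMapGA_eq_sliceLeft, injective_iff_map_eq_zero, ← drinfeldMapGA_eq_sliceLeft]
  simp_rw [drinfeldMapGA_eq_zero_iff]
  rw [forall_dual_eq_zero_iff_surjective fun a : ZMod n => Multiplicative.ofAdd (2 * a)]
  exact EquivLike.comp_surjective _ Multiplicative.ofAdd

end Cyclic

/-- The quasitriangular Hopf algebra `ℂ[ℤ_n]` with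
`R = (1/n) Σ_{a,b} e^{-2πiab/n} gᵃ ⊗ gᵇ` is factorizable (the Drinfeld map
`p ↦ (p ⊗ id)(R₂₁R)` is a linear isomorphism) if and only if `n` is odd. -/
theorem group_algebra_factorizable_iff_odd (n : ℕ) (hn : 0 < n) :
    Function.Bijective (drinfeldMapGA n) ↔ Odd n := by
  have : NeZero n := ⟨hn.ne'⟩
  have hinj_iff_surj := LinearMap.injective_iff_surjective_of_finrank_eq_finrank
    (f := sliceLeft (TensorProduct.comm ℂ (GA n) (GA n) (Rmat n) * Rmat n))
    Subspace.dual_finrank_eq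
  rw [Function.Bijective, drinfeldMapGA_eq_sliceLeft, ← hinj_iff_surj, and_self,
    ← drinfeldMapGA_eq_sliceLeft, injective_drinfeldMapGA_iff, ZMod.surjective_two_mul_iff_odd]

end
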